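/- For an ideal I in a Noetherian ring R, the set 𝓛(I) = {P ∈ Spec(R) : I_P is of linear type} is an open subset of Spec(R); more precisely, 𝓛(I) = Spec(R) ∖ V(C(I)), where V(C(I)) is the set of primes containing C(I). -/

import Mathlib

noncomputable section

universe u v

/-- The `R`-algebra map `φ : T = R[y_i : i ∈ ι] → R[t]` sending `y_i ↦ f i · t`. -/
def reesHom {R : Type u} [CommRing R] {ι : Type v} (f : ι → R) :
    MvPolynomial ι R →ₐ[R] Polynomial R :=
  MvPolynomial.aeval fun i => Polynomial.C (f i) * Polynomial.X

/-- `J`, the defining ideal of the Rees algebra of the ideal generated by `f`. -/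
def reesJ {R : Type u} [CommRing R] {ι : Type v} (f : ι → R) :
    Ideal (MvPolynomial ι R) :=
  RingHom.ker (reesHom f)

/-- `L`, the ideal of `T` generated by the linear relations `∑ aᵢ yᵢ` with `∑ aᵢ fᵢ = 0`. -/
def linRel {R : Type u} [CommRing R] {ι : Type v} (f : ι → R) :
    Ideal (MvPolynomial ι R) :=
  Ideal.span {p | ∃ a : ι →₀ R, (a.sum fun i r => r * f i) = 0 ∧
    p = a.sum fun i r => MvPolynomial.C r * MvPolynomial.X i}

/-- The conductor `C(I) = L :_R J = {r ∈ R : r J ⊆ L}`. -/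
def conductorIdeal {R : Type u} [CommRing R] {ι : Type v} (f : ι → R) : Ideal R :=
  Submodule.colon (Submodule.restrictScalars R (linRel f))
    (Submodule.restrictScalars R (reesJ f))

/-- The ideal generated by `f` is of linear type if `J = L`. -/
def IsLinearType {R : Type u} [CommRing R] {ι : Type v} (f : ι → R) : Prop :=
  reesJ f = linRel f

end

/-!
Forming `J` and `L` commutes with localization at a submonoid `M`: `J_M` is the kernel of the
localized map `T_M → S[t]`, and a linear relation over `S = M⁻¹R` becomes one over `R` after
clearing denominators. So `I_M` is of linear type iff `J_M ≤ L_M`, and since `J` is finitely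
generated (`T` is Noetherian) this happens iff a single `r ∈ M` satisfies `r J ⊆ L`, i.e. iff
`M` meets `C(I)`. Taking `M = R ∖ P` gives `𝓛(I) = Spec R ∖ V(C(I))`.
-/

open MvPolynomial

attribute [local instance] MvPolynomial.algebraMvPolynomial Polynomial.algebra

theorem IsLocalization.map_le_map_iff_exists_mul_mem {A B : Type*} [CommRing A] [CommRing B]
    [Algebra A B] (N : Submonoid A) [IsLocalization N B] {J L : Ideal A} (hJ : J.FG) :
    J.map (algebraMap A B) ≤ L.map (algebraMap A B) ↔ ∃ s ∈ N, ∀ x ∈ J, s * x ∈ L := by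
  classical
  refine ⟨fun h => ?_, fun ⟨s, hsN, hs⟩ => Ideal.map_le_iff_le_comap.mpr fun x hx =>
    (algebraMap_mem_map_algebraMap_iff N B L x).mpr ⟨s, hsN, hs x hx⟩⟩
  obtain ⟨G, rfl⟩ := hJ
  have hG (x) (hx : x ∈ G) : ∃ m ∈ N, m * x ∈ L :=
    (algebraMap_mem_map_algebraMap_iff N B L x).mp
      (h (Ideal.mem_map_of_mem _ (Ideal.subset_span hx)))
  choose! m hmN hmL using hG
  refine ⟨∏ x ∈ G, m x, prod_mem hmN, fun x hx => ?_⟩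
  suffices Ideal.span (G : Set A) ≤ Submodule.comap (LinearMap.mulLeft A (∏ x ∈ G, m x)) L from
    this hx
  refine Ideal.span_le.mpr fun y hy => ?_
  rw [SetLike.mem_coe, Submodule.mem_comap, LinearMap.mulLeft_apply,
    ← Finset.prod_erase_mul _ _ hy, mul_assoc]
  exact L.mul_mem_left _ (hmL y hy)

section

variable {R S : Type*} [CommRing R] [CommRing S] [Algebra R S] {ι : Type*} (f : ι → R)

lemma reesHom_comp_map :
    (reesHom fun i => algebraMap R S (f i) : MvPolynomial ι S →+* Polynomial S).comp
        (map (algebraMap R S)) =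
      (Polynomial.mapRingHom (algebraMap R S)).comp (reesHom f : MvPolynomial ι R →+* _) := by
  ext <;> simp [reesHom]

lemma reesJ_map (M : Submonoid R) [IsLocalization M S] :
    reesJ (fun i => algebraMap R S (f i)) =
      (reesJ f).map (algebraMap (MvPolynomial ι R) (MvPolynomial ι S)) := by
  have := Polynomial.isLocalization M S
  have hM : (M.map (C (σ := ι))).map (reesHom f : MvPolynomial ι R →+* _) =
      M.map Polynomial.C := by
    ext p
    simp [Submonoid.mem_map, reesHom]
  rw [reesJ, reesJ, ← RingHom.ker_coe_toRingHom, ← RingHom.ker_coe_toRingHom (reesHom f),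
    ← IsLocalization.ker_map (Polynomial S) _ hM]
  congr 1
  refine IsLocalization.ringHom_ext (M.map (C (σ := ι))) ?_
  rw [IsLocalization.map_comp]
  exact reesHom_comp_map f

lemma map_linRel_le :
    (linRel f).map (algebraMap (MvPolynomial ι R) (MvPolynomial ι S)) ≤
      linRel fun i => algebraMap R S (f i) := by
  rw [linRel, Ideal.map_span, Ideal.span_le]
  rintro _ ⟨_, ⟨a, ha, rfl⟩, rfl⟩
  refine Ideal.subset_span ⟨a.mapRange (algebraMap R S) (map_zero _), ?_, ?_⟩
  · rw [Finsupp.sum_mapRange_index (by simp), ← map_zero (algebraMap R S), ← ha, map_finsuppSum]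
    simp
  · rw [Finsupp.sum_mapRange_index (by simp), algebraMap_def, map_finsuppSum]
    simp

lemma linRel_le_map [Fintype ι] (M : Submonoid R) [IsLocalization M S] :
    linRel (fun i => algebraMap R S (f i)) ≤
      (linRel f).map (algebraMap (MvPolynomial ι R) (MvPolynomial ι S)) := by
  classical
  rw [linRel, Ideal.span_le]
  rintro _ ⟨b, hb, rfl⟩
  obtain ⟨t, ht⟩ := IsLocalization.exist_integer_multiples_of_finite M (fun i => b i)
  choose a ha using ht
  obtain ⟨u, hu⟩ : ∃ u : M, u * ∑ i, a i * f i = 0 := by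
    refine (IsLocalization.map_eq_zero_iff M S _).mp ?_
    rw [Finsupp.sum_fintype _ _ (by simp)] at hb
    simp [map_sum, ha, Algebra.smul_def, mul_assoc, ← Finset.mul_sum, hb]
  have hlin : (b.sum fun i r => C r * X i) =
      IsLocalization.mk' (MvPolynomial ι S) (∑ i, C (a i) * X i)
        (⟨C t, Submonoid.mem_map_of_mem _ t.2⟩ : M.map (C (σ := ι))) := by
    rw [IsLocalization.eq_mk'_iff_mul_eq, Finsupp.sum_fintype _ _ (by simp), algebraMap_def,
      map_sum, Finset.sum_mul]
    refine Finset.sum_congr rfl fun i _ => ?_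
    rw [map_mul, map_C, map_C, map_X, ha, Algebra.smul_def, C_mul]
    ring
  rw [SetLike.mem_coe, hlin, IsLocalization.mk'_mem_map_algebraMap_iff]
  refine ⟨C u, Submonoid.mem_map_of_mem _ u.2,
    Ideal.subset_span ⟨Finsupp.equivFunOnFinite.symm fun i => u * a i, ?_, ?_⟩⟩
  · simp [Finsupp.sum_fintype, mul_assoc, ← Finset.mul_sum, hu]
  · simp [Finsupp.sum_fintype, Finset.mul_sum, mul_assoc]

lemma linRel_map [Fintype ι] (M : Submonoid R) [IsLocalization M S] :
    linRel (fun i => algebraMap R S (f i)) =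
      (linRel f).map (algebraMap (MvPolynomial ι R) (MvPolynomial ι S)) :=
  le_antisymm (linRel_le_map f M) (map_linRel_le f)

lemma linRel_le_reesJ : linRel f ≤ reesJ f := by
  rw [linRel, Ideal.span_le]
  rintro _ ⟨a, ha, rfl⟩
  rw [SetLike.mem_coe, reesJ, RingHom.mem_ker]
  calc reesHom f (a.sum fun i r => C r * X i)
      = Polynomial.C (a.sum fun i r => r * f i) * Polynomial.X := by
        simp [reesHom, map_finsuppSum, Finsupp.sum_mul, mul_assoc]
    _ = 0 := by rw [ha, map_zero, zero_mul]

lemma mem_conductorIdeal_iff (r : R) :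
    r ∈ conductorIdeal f ↔ ∀ p ∈ reesJ f, C r * p ∈ linRel f := by
  simp only [conductorIdeal, Submodule.mem_colon, SetLike.mem_coe, Submodule.restrictScalars_mem,
    smul_eq_C_mul]

theorem isLinearType_iff_exists_mem_conductorIdeal [IsNoetherianRing R] [Fintype ι]
    (M : Submonoid R) [IsLocalization M S] :
    IsLinearType (fun i => algebraMap R S (f i)) ↔ ∃ r ∈ M, r ∈ conductorIdeal f := by
  rw [IsLinearType, reesJ_map f M, linRel_map f M, le_antisymm_iff,
    and_iff_left (Ideal.map_mono (linRel_le_reesJ f)),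
    IsLocalization.map_le_map_iff_exists_mul_mem (M.map C) (IsNoetherian.noetherian _)]
  simp [Submonoid.mem_map, mem_conductorIdeal_iff]

end

theorem stmt_2_general {R : Type} [CommRing R] [IsNoetherianRing R] {m : ℕ}
    (f : Fin m → R) :
    {P : PrimeSpectrum R |
        IsLinearType fun j => algebraMap R (Localization.AtPrime P.asIdeal) (f j)} =
      (PrimeSpectrum.zeroLocus (conductorIdeal f : Set R))ᶜ ∧
    IsOpen {P : PrimeSpectrum R |
        IsLinearType fun j => algebraMap R (Localization.AtPrime P.asIdeal) (f j)} := by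
  have hlocus : {P : PrimeSpectrum R |
        IsLinearType fun j => algebraMap R (Localization.AtPrime P.asIdeal) (f j)} =
      (PrimeSpectrum.zeroLocus (conductorIdeal f : Set R))ᶜ := by
    ext P
    rw [Set.mem_ofPred_eq, isLinearType_iff_exists_mem_conductorIdeal f P.asIdeal.primeCompl,
      Set.mem_compl_iff, PrimeSpectrum.mem_zeroLocus, Set.not_subset]
    simp only [Ideal.primeCompl, Submonoid.mem_mk, Subsemigroup.mem_mk, Set.mem_compl_iff,
      SetLike.mem_coe, and_comm]
  exact ⟨hlocus, hlocus ▸ (PrimeSpectrum.isClosed_zeroLocus _).isOpen_compl⟩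

/-- The locus `𝓛(I)` of primes `P` such that `I_P` is of linear
type equals the complement of `V(C(I))` in `Spec R`, and is open. -/
theorem stmt_2 {R : Type} [CommRing R] [IsNoetherianRing R] {m : ℕ}
    (f : Fin m → R) (I : Ideal R) (hI : I = Ideal.span (Set.range f)) :
    {P : PrimeSpectrum R |
        IsLinearType fun j => algebraMap R (Localization.AtPrime P.asIdeal) (f j)} =
      (PrimeSpectrum.zeroLocus (conductorIdeal f : Set R))ᶜ ∧
    IsOpen {P : PrimeSpectrum R |
        IsLinearType fun j => algebraMap R (Localization.AtPrime P.asIdeal) (f j)} :=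
  stmt_2_general f
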